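/- arXiv:2108.03148 — 4 statements merged into one kernel-verified Lean document; each statement's English description precedes it below -/
import Mathlib

section
/- Let t, x be real numbers with x ≥ 0 and 1 - x + t/2 > 0. Define ς = (1/2)√(1 - x + t/2) + (1/2)√(1 + x + t/2), and define t# = 1/(1 - x + t/2) + 1/(1 + x + t/2) - 2, x# = x/((1+t/2)² - x²), and ς# = (1/2)√(1 - x# + t#/2) + (1/2)√(1 + x# + t#/2). Then the following identities hold: t# = -2 + 4(ς#)² - 2ς#/ς and x² = 4ς⁴ - 4ς³/ς#. -/
lemma stmt7_aux1 (a b : ℝ) (ha : a ≠ 0) (hb : b ≠ 0) :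
    1 - ((b - a)/2)/(a*b) + (1/a + 1/b - 2)/2 = 1/b := by
  field_simp
  ring

lemma stmt7_aux2 (a b : ℝ) (ha : a ≠ 0) (hb : b ≠ 0) :
    1 + ((b - a)/2)/(a*b) + (1/a + 1/b - 2)/2 = 1/a := by
  field_simp
  ring

/-- Identities relating the auxiliary variables `ς`, `ς#` to the trace and
`|G₂|`-modulus components of a metric and its inverse. -/
theorem stmt7 (t x : ℝ) (hx : 0 ≤ x) (h : 0 < 1 - x + t/2) :
    let ς := (1/2) * Real.sqrt (1 - x + t/2) + (1/2) * Real.sqrt (1 + x + t/2)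
    let ts := 1/(1 - x + t/2) + 1/(1 + x + t/2) - 2
    let xs := x/((1 + t/2)^2 - x^2)
    let ςs := (1/2) * Real.sqrt (1 - xs + ts/2) + (1/2) * Real.sqrt (1 + xs + ts/2)
    ts = -2 + 4*ςs^2 - 2*ςs/ς ∧ x^2 = 4*ς^4 - 4*ς^3/ςs := by
  intro ς ts xs ςs
  have ha0 : 0 < 1 - x + t/2 := h
  have hb0 : 0 < 1 + x + t/2 := by linarith
  have hab : (1 + t/2)^2 - x^2 = (1 - x + t/2) * (1 + x + t/2) := by ring
  have hxe : x = ((1 + x + t/2) - (1 - x + t/2))/2 := by ring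
  have h1 : 1 - xs + ts/2 = 1/(1 + x + t/2) := by
    simp only [xs, ts, hab]
    calc 1 - x/((1 - x + t/2) * (1 + x + t/2))
          + (1/(1 - x + t/2) + 1/(1 + x + t/2) - 2)/2
        = 1 - (((1 + x + t/2) - (1 - x + t/2))/2)/((1 - x + t/2) * (1 + x + t/2))
          + (1/(1 - x + t/2) + 1/(1 + x + t/2) - 2)/2 := by rw [← hxe]
      _ = 1/(1 + x + t/2) := stmt7_aux1 _ _ ha0.ne' hb0.ne'
  have h2 : 1 + xs + ts/2 = 1/(1 - x + t/2) := by
    simp only [xs, ts, hab]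
    calc 1 + x/((1 - x + t/2) * (1 + x + t/2))
          + (1/(1 - x + t/2) + 1/(1 + x + t/2) - 2)/2
        = 1 + (((1 + x + t/2) - (1 - x + t/2))/2)/((1 - x + t/2) * (1 + x + t/2))
          + (1/(1 - x + t/2) + 1/(1 + x + t/2) - 2)/2 := by rw [← hxe]
      _ = 1/(1 - x + t/2) := stmt7_aux2 _ _ ha0.ne' hb0.ne'
  have hςs : ςs = (1/2) * (1/Real.sqrt (1 + x + t/2)) + (1/2) * (1/Real.sqrt (1 - x + t/2)) := by
    simp only [ςs, h1, h2, one_div, Real.sqrt_inv]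
  have hς : ς = (1/2) * Real.sqrt (1 - x + t/2) + (1/2) * Real.sqrt (1 + x + t/2) := rfl
  have hts : ts = 1/(1 - x + t/2) + 1/(1 + x + t/2) - 2 := rfl
  have hsa := Real.sq_sqrt ha0.le
  have hsb := Real.sq_sqrt hb0.le
  have hsa0 : 0 < Real.sqrt (1 - x + t/2) := Real.sqrt_pos.mpr ha0
  have hsb0 : 0 < Real.sqrt (1 + x + t/2) := Real.sqrt_pos.mpr hb0
  set sa := Real.sqrt (1 - x + t/2) with hsadef
  set sb := Real.sqrt (1 + x + t/2) with hsbdef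
  have hx2 : x = (sb^2 - sa^2)/2 := by rw [hsa, hsb]; ring
  have hsum : (0:ℝ) < sa + sb := by linarith
  constructor
  · rw [hts, hςs, hς, ← hsa, ← hsb]
    field_simp
    ring
  · rw [hx2, hςs, hς]
    rw [show (1:ℝ)/2 * (1/sb) + 1/2 * (1/sa) = (sa + sb)/(2*sa*sb) by
      field_simp]
    rw [div_div_eq_mul_div]
    field_simp
    ring
end

section
/- Let l, n be positive real numbers and m a complex number with l·n > m·conj(m) (= |m|²). Define the 5×5 Hermitian matrix B = [[n³·n, -n³·m, 0, 0, 0], [-n³·m̄, n³·l + l·n²·n, -l·n²·m, 0, 0], [0, -l·n²·m̄, l·n²·l + l²·n·n, -l²·n·m, 0], [0, 0, -l²·n·m̄, l²·n·l + l³·n, -l³·m], [0, 0, 0, -l³·m̄, l³·l]] (i.e. the matrix B^t of Corollary 3.13 with l^t = n^t replaced by the scalars l, n, m^t = m, and all coordinate components equal to these scalars; formally: B₁₁ = n⁴, B₁₂ = -n³m, B₂₂ = n³l + ln³, B₂₃ = -ln²m, B₃₃ = ln²l + l²n², B₃₄ = -l²nm, B₄₄ = l²nl + l³n, B₄₅ =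 -l³m, B₅₅ = l⁴, with conjugate-symmetric lower entries and zeros elsewhere). Then det B = 4·l⁸·n⁸·(l·n - |m|²)·(2·l·n - |m|²), and B is positive definite. -/
open Matrix Complex ComplexOrder
open scoped ComplexConjugate

/-! The principal symbol is the sum, over `k < 4`, of `l^k n^(3-k)` times the block
`!![n, -m; -conj m, l]` placed at rows and columns `k, k + 1`. The block is positive definite
(`n > 0`, determinant `l n - |m|² > 0`), so the quadratic form of the symbol is a positive
combination of the block's forms on consecutive pairs of components `(x k, x (k + 1))`. Each
of these is nonnegative, and since every component occurs in some pair, at least one is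
positive when `x ≠ 0`. The determinant is a direct cofactor expansion. -/

/-- `B^t` with all coordinate components of `l^a, n^a, m^a` equal to `l, n, m`. -/
def symbolMatrix (l n : ℝ) (m : ℂ) : Matrix (Fin 5) (Fin 5) ℂ :=
  !![(n:ℂ)^4, -((n:ℂ)^3*m), 0, 0, 0;
     -((n:ℂ)^3 * (starRingEnd ℂ) m), 2*(l:ℂ)*(n:ℂ)^3, -((l:ℂ)*(n:ℂ)^2*m), 0, 0;
     0, -((l:ℂ)*(n:ℂ)^2*(starRingEnd ℂ) m), 2*(l:ℂ)^2*(n:ℂ)^2, -((l:ℂ)^2*(n:ℂ)*m), 0;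
     0, 0, -((l:ℂ)^2*(n:ℂ)*(starRingEnd ℂ) m), 2*(l:ℂ)^3*(n:ℂ), -((l:ℂ)^3*m);
     0, 0, 0, -((l:ℂ)^3*(starRingEnd ℂ) m), (l:ℂ)^4]

/-- The Hermitian form of the block `!![n, -m; -conj m, l]` at `(a, b)`. -/
def pairForm (l n : ℝ) (m a b : ℂ) : ℝ :=
  n * normSq a + l * normSq b - 2 * (m * conj a * b).re

section pairForm

variable {l n : ℝ} {m : ℂ}

theorem mul_pairForm (a b : ℂ) :
    n * pairForm l n m a b = normSq (n * a - m * b) + (l * n - normSq m) * normSq b := by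
  simp only [pairForm, normSq_apply, sub_re, sub_im, mul_re, mul_im, ofReal_re, ofReal_im,
    conj_re, conj_im]
  ring

theorem pairForm_nonneg (hn : 0 < n) (hmn : normSq m ≤ l * n) (a b : ℂ) :
    0 ≤ pairForm l n m a b := by
  refine nonneg_of_mul_nonneg_right ?_ hn
  rw [mul_pairForm]
  exact add_nonneg (normSq_nonneg _) (mul_nonneg (sub_nonneg.mpr hmn) (normSq_nonneg _))

theorem pairForm_pos (hn : 0 < n) (hmn : normSq m < l * n) {a b : ℂ} (hab : a ≠ 0 ∨ b ≠ 0) :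
    0 < pairForm l n m a b := by
  refine pos_of_mul_pos_right ?_ hn.le
  rw [mul_pairForm]
  rcases eq_or_ne b 0 with rfl | hb
  · simpa [normSq_mul, hn.ne'] using hab
  · exact add_pos_of_nonneg_of_pos (normSq_nonneg _)
      (mul_pos (by linarith) (normSq_pos.mpr hb))

theorem sum_pairForm_pos (hn : 0 < n) (hmn : normSq m < l * n) {N : ℕ} {c : Fin (N + 1) → ℝ}
    (hc : ∀ k, 0 < c k) {x : Fin (N + 2) → ℂ} (hx : x ≠ 0) :
    0 < ∑ k, c k * pairForm l n m (x k.castSucc) (x k.succ) := by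
  obtain ⟨i, hi⟩ := Function.ne_iff.mp hx
  refine Finset.sum_pos' (fun k _ => mul_nonneg (hc k).le (pairForm_nonneg hn hmn.le _ _)) ?_
  obtain ⟨k, hik⟩ : ∃ k : Fin (N + 1), x k.castSucc ≠ 0 ∨ x k.succ ≠ 0 := by
    rcases Fin.eq_castSucc_or_eq_last i with ⟨k, rfl⟩ | rfl
    · exact ⟨k, Or.inl hi⟩
    · exact ⟨Fin.last N, Or.inr hi⟩
  exact ⟨k, Finset.mem_univ _, mul_pos (hc k) (pairForm_pos hn hmn hik)⟩

end pairForm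

theorem symbolMatrix_isHermitian (l n : ℝ) (m : ℂ) : (symbolMatrix l n m).IsHermitian := by
  ext i j
  fin_cases i <;> fin_cases j <;> simp [symbolMatrix, mul_comm]

theorem dotProduct_symbolMatrix_mulVec (l n : ℝ) (m : ℂ) (x : Fin 5 → ℂ) :
    star x ⬝ᵥ (symbolMatrix l n m *ᵥ x) =
      ((∑ k : Fin 4, l ^ (k : ℕ) * n ^ (3 - k : ℕ) *
        pairForm l n m (x k.castSucc) (x k.succ) : ℝ) : ℂ) := by
  simp only [pairForm, Fin.sum_univ_four]
  push_cast
  simp only [normSq_eq_conj_mul_self, re_eq_add_conj]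
  simp only [dotProduct, Pi.star_apply, RCLike.star_def, mulVec, symbolMatrix, of_apply, cons_val',
    cons_val_fin_one, Fin.sum_univ_five, Fin.isValue, cons_val_zero, cons_val_one, cons_val, neg_mul,
    zero_mul, add_zero, zero_add, Fin.coe_ofNat_eq_mod, Nat.zero_mod, pow_zero, tsub_zero, one_mul,
    map_mul, RingHomCompTriple.comp_apply, RingHom.id_apply, Nat.one_mod, pow_one,
    Nat.add_one_sub_one, Nat.reduceMod, Nat.reduceSub, Nat.mod_succ, tsub_self, mul_one]
  ring

theorem symbolMatrix_posDef {l n : ℝ} {m : ℂ} (hl : 0 < l) (hn : 0 < n)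
    (hmn : normSq m < l * n) :
    (symbolMatrix l n m).PosDef := by
  refine posDef_iff_dotProduct_mulVec.mpr ⟨symbolMatrix_isHermitian l n m, fun x hx => ?_⟩
  rw [dotProduct_symbolMatrix_mulVec, zero_lt_real]
  exact sum_pairForm_pos hn hmn (fun k => by positivity) hx

theorem det_symbolMatrix (l n : ℝ) (m : ℂ) :
    (symbolMatrix l n m).det =
      ((4 * l^8 * n^8 * (l*n - normSq m) * (2*l*n - normSq m) : ℝ) : ℂ) := by
  push_cast
  rw [← mul_conj]
  simp [symbolMatrix, det_succ_row_zero, Fin.sum_univ_succ, Fin.succAbove]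
  ring

/-- The principal symbol matrix `B^t` of the symmetric-hyperbolic curvature system:
its determinant is `4 l⁸ n⁸ (ln - |m|²)(2ln - |m|²)` and it is positive definite. -/
theorem stmt8 (l n : ℝ) (m : ℂ) (hl : 0 < l) (hn : 0 < n)
    (hmn : Complex.normSq m < l * n) :
    let B : Matrix (Fin 5) (Fin 5) ℂ :=
      !![(n:ℂ)^4, -((n:ℂ)^3*m), 0, 0, 0;
         -((n:ℂ)^3 * (starRingEnd ℂ) m), 2*(l:ℂ)*(n:ℂ)^3, -((l:ℂ)*(n:ℂ)^2*m), 0, 0;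
         0, -((l:ℂ)*(n:ℂ)^2*(starRingEnd ℂ) m), 2*(l:ℂ)^2*(n:ℂ)^2, -((l:ℂ)^2*(n:ℂ)*m), 0;
         0, 0, -((l:ℂ)^2*(n:ℂ)*(starRingEnd ℂ) m), 2*(l:ℂ)^3*(n:ℂ), -((l:ℂ)^3*m);
         0, 0, 0, -((l:ℂ)^3*(starRingEnd ℂ) m), (l:ℂ)^4]
    B.det = ((4 * l^8 * n^8 * (l*n - Complex.normSq m) * (2*l*n - Complex.normSq m) : ℝ) : ℂ)
      ∧ B.PosDef :=
  ⟨det_symbolMatrix l n m, symbolMatrix_posDef hl hn hmn⟩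
end

section
/- Let l, n ∈ ℝ⁴ and m ∈ ℂ⁴ (with complex conjugate m̄), and suppose the four real vectors l, n, Re(m)·√2, Im(m)·√2 are linearly independent. Define the symmetric bilinear form g# on (ℝ⁴)* (equivalently the 4×4 real symmetric matrix) by g#(ξ,ζ) = (l·ξ)(n·ζ) + (n·ξ)(l·ζ) - (m·ξ)(m̄·ζ) - (m̄·ξ)(m·ζ), i.e. g# = 2 l⊙n - 2 Re(m ⊗ m̄). Then g# is nondegenerate with signature (1,3): the associated quadratic form ξ ↦ 2(l·ξ)(n·ξ) - 2|m·ξ|² is positive on a 1-dimensional subspace and negative on a complementary 3-dimensional subspace. -/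
open Matrix

private lemma stmt14_aux_neg (y0 y1 y2 y3 : ℝ) (hsum : y1 = -y0)
    (h : y0 ≠ 0 ∨ y2 ≠ 0 ∨ y3 ≠ 0) : 2 * y0 * y1 - y2 ^ 2 - y3 ^ 2 < 0 := by
  subst hsum
  rcases h with h | h | h
  · nlinarith [sq_nonneg y2, sq_nonneg y3, mul_self_pos.mpr h]
  · nlinarith [sq_nonneg y0, sq_nonneg y3, mul_self_pos.mpr h]
  · nlinarith [sq_nonneg y0, sq_nonneg y2, mul_self_pos.mpr h]

private lemma stmt14_aux_pos (c : ℝ) (hc : c ≠ 0) :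
    0 < 2 * c * c - 0 ^ 2 - 0 ^ 2 := by
  nlinarith [mul_self_pos.mpr hc]

/-- The inverse metric `g# = 2 l⊙n - 2 Re(m ⊗ m̄)` reconstructed from a complex null
tetrad is nondegenerate with Lorentzian signature `(1,3)`. -/
theorem stmt14 (l n : Fin 4 → ℝ) (m : Fin 4 → ℂ)
    (hli : LinearIndependent ℝ
      ![l, n, fun i => Real.sqrt 2 * (m i).re, fun i => Real.sqrt 2 * (m i).im]) :
    (∀ ξ : Fin 4 → ℝ, (∀ ζ : Fin 4 → ℝ,
        (l ⬝ᵥ ξ) * (n ⬝ᵥ ζ) + (n ⬝ᵥ ξ) * (l ⬝ᵥ ζ)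
          - 2 * ((∑ i, m i * (ξ i : ℂ)) * (starRingEnd ℂ) (∑ i, m i * (ζ i : ℂ))).re = 0)
      → ξ = 0) ∧
    ∃ P N : Submodule ℝ (Fin 4 → ℝ), IsCompl P N ∧
      Module.finrank ℝ P = 1 ∧ Module.finrank ℝ N = 3 ∧
      (∀ ξ ∈ P, ξ ≠ 0 →
        0 < 2 * (l ⬝ᵥ ξ) * (n ⬝ᵥ ξ) - 2 * Complex.normSq (∑ i, m i * (ξ i : ℂ))) ∧
      (∀ ξ ∈ N, ξ ≠ 0 →
        2 * (l ⬝ᵥ ξ) * (n ⬝ᵥ ξ) - 2 * Complex.normSq (∑ i, m i * (ξ i : ℂ)) < 0) := by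
  set a : Fin 4 → ℝ := fun i => Real.sqrt 2 * (m i).re with ha
  set b : Fin 4 → ℝ := fun i => Real.sqrt 2 * (m i).im with hb
  set M : Matrix (Fin 4) (Fin 4) ℝ := Matrix.of ![l, n, a, b] with hM
  have hU : IsUnit M := Matrix.linearIndependent_rows_iff_isUnit.mp hli
  have hinv : Invertible M := hU.invertible
  set E : (Fin 4 → ℝ) ≃ₗ[ℝ] (Fin 4 → ℝ) := M.toLinearEquiv' hinv with hEdef
  have hE : ∀ ξ, E ξ = M.mulVec ξ := by
    intro ξ
    show (M.toLinearEquiv' hinv : Module.End ℝ (Fin 4 → ℝ)) ξ = _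
    rw [Matrix.toLinearEquiv'_apply]; exact Matrix.toLin'_apply M ξ
  have hinj : Function.Injective M.mulVec := M.mulVec_injective_of_invertible
  have h0 : ∀ ξ, M.mulVec ξ 0 = l ⬝ᵥ ξ := by intro ξ; simp [hM, Matrix.mulVec]
  have h1 : ∀ ξ, M.mulVec ξ 1 = n ⬝ᵥ ξ := by intro ξ; simp [hM, Matrix.mulVec]
  have h2 : ∀ ξ, M.mulVec ξ 2 = a ⬝ᵥ ξ := by intro ξ; simp [hM, Matrix.mulVec]
  have h3 : ∀ ξ, M.mulVec ξ 3 = b ⬝ᵥ ξ := by intro ξ; simp [hM, Matrix.mulVec]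
  -- real/imag parts of the complex pairing
  have hre : ∀ ξ : Fin 4 → ℝ, (∑ i, m i * (ξ i : ℂ)).re = ∑ i, (m i).re * ξ i := by
    intro ξ; rw [Complex.re_sum]
    exact Finset.sum_congr rfl fun i _ => by simp [Complex.mul_re]
  have him : ∀ ξ : Fin 4 → ℝ, (∑ i, m i * (ξ i : ℂ)).im = ∑ i, (m i).im * ξ i := by
    intro ξ; rw [Complex.im_sum]
    exact Finset.sum_congr rfl fun i _ => by simp [Complex.mul_im]
  have hadp : ∀ ξ : Fin 4 → ℝ, a ⬝ᵥ ξ = Real.sqrt 2 * ∑ i, (m i).re * ξ i := by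
    intro ξ; rw [Finset.mul_sum]
    exact Finset.sum_congr rfl fun i _ => by rw [ha]; ring
  have hbdp : ∀ ξ : Fin 4 → ℝ, b ⬝ᵥ ξ = Real.sqrt 2 * ∑ i, (m i).im * ξ i := by
    intro ξ; rw [Finset.mul_sum]
    exact Finset.sum_congr rfl fun i _ => by rw [hb]; ring
  have hs2 : Real.sqrt 2 * Real.sqrt 2 = 2 := Real.mul_self_sqrt (by norm_num)
  -- quadratic form identity
  have hQ : ∀ ξ : Fin 4 → ℝ,
      2 * (l ⬝ᵥ ξ) * (n ⬝ᵥ ξ) - 2 * Complex.normSq (∑ i, m i * (ξ i : ℂ))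
        = 2 * (M.mulVec ξ 0) * (M.mulVec ξ 1) - (M.mulVec ξ 2)^2 - (M.mulVec ξ 3)^2 := by
    intro ξ
    rw [h0, h1, h2, h3, Complex.normSq_apply, hre, him, hadp, hbdp]
    linear_combination ((∑ i, (m i).re * ξ i)^2 + (∑ i, (m i).im * ξ i)^2) * hs2
  -- bilinear form identity
  have hB : ∀ ξ ζ : Fin 4 → ℝ,
      (l ⬝ᵥ ξ) * (n ⬝ᵥ ζ) + (n ⬝ᵥ ξ) * (l ⬝ᵥ ζ)
        - 2 * ((∑ i, m i * (ξ i : ℂ)) * (starRingEnd ℂ) (∑ i, m i * (ζ i : ℂ))).re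
      = (M.mulVec ξ 0) * (M.mulVec ζ 1) + (M.mulVec ξ 1) * (M.mulVec ζ 0)
        - (M.mulVec ξ 2) * (M.mulVec ζ 2) - (M.mulVec ξ 3) * (M.mulVec ζ 3) := by
    intro ξ ζ
    rw [h0, h1, h2, h3, h0, h1, h2, h3, hadp, hbdp, hadp, hbdp]
    have : ((∑ i, m i * (ξ i : ℂ)) * (starRingEnd ℂ) (∑ i, m i * (ζ i : ℂ))).re
        = (∑ i, (m i).re * ξ i) * (∑ i, (m i).re * ζ i)
          + (∑ i, (m i).im * ξ i) * (∑ i, (m i).im * ζ i) := by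
      rw [Complex.mul_re, Complex.conj_re, Complex.conj_im, hre, him, hre, him]; ring
    rw [this]
    linear_combination ((∑ i, (m i).re * ξ i) * (∑ i, (m i).re * ζ i)
      + (∑ i, (m i).im * ξ i) * (∑ i, (m i).im * ζ i)) * hs2
  constructor
  · -- nondegeneracy
    intro ξ h
    apply hinj; rw [Matrix.mulVec_zero]
    have key : ∀ y : Fin 4 → ℝ,
        (M.mulVec ξ 0) * (y 1) + (M.mulVec ξ 1) * (y 0)
          - (M.mulVec ξ 2) * (y 2) - (M.mulVec ξ 3) * (y 3) = 0 := by
      intro y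
      obtain ⟨ζ, hζ⟩ := M.mulVec_surjective_of_invertible y
      have := h ζ
      rw [hB ξ ζ, hζ] at this
      exact this
    funext k
    fin_cases k
    · simpa using key (Pi.single 1 1)
    · simpa using key (Pi.single 0 1)
    · have := key (Pi.single 2 1); simp at this; simpa using this
    · have := key (Pi.single 3 1); simp at this; simpa using this
  · -- signature
    set v : Fin 4 → ℝ := ![1, 1, 0, 0] with hv
    have hvne : v ≠ 0 := by
      intro h; have := congrFun h 0; simp [hv] at this
    set g : (Fin 4 → ℝ) →ₗ[ℝ] ℝ := LinearMap.proj (R := ℝ) (φ := fun _ : Fin 4 => ℝ) 0 + LinearMap.proj (R := ℝ) (φ := fun _ : Fin 4 => ℝ) 1 with hg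
    have hgx : ∀ x : Fin 4 → ℝ, g x = x 0 + x 1 := fun x => rfl
    have hgv : g v = 2 := by rw [hgx]; norm_num [hv]
    set P0 : Submodule ℝ (Fin 4 → ℝ) := Submodule.span ℝ {v} with hP0
    set N0 : Submodule ℝ (Fin 4 → ℝ) := LinearMap.ker g with hN0
    have hcompl0 : IsCompl P0 N0 := by
      constructor
      · rw [Submodule.disjoint_def]
        intro x hxP hxN
        rw [hP0, Submodule.mem_span_singleton] at hxP
        obtain ⟨c, rfl⟩ := hxP
        rw [hN0, LinearMap.mem_ker, g.map_smul, hgv, smul_eq_mul] at hxN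
        have : c = 0 := by linarith
        simp [this]
      · rw [codisjoint_iff, eq_top_iff]
        intro x _
        have hx : x = (g x / 2) • v + (x - (g x / 2) • v) := by abel
        rw [hx]
        apply Submodule.add_mem_sup
        · exact Submodule.smul_mem _ _ (Submodule.mem_span_singleton_self v)
        · rw [hN0, LinearMap.mem_ker, map_sub, g.map_smul, hgv, smul_eq_mul]
          ring
    have hrk0 : Module.finrank ℝ P0 = 1 := finrank_span_singleton hvne
    have hrkN0 : Module.finrank ℝ N0 = 3 := by
      have hsurj : Function.Surjective g := by
        intro c
        exact ⟨(c / 2) • v, by rw [g.map_smul, hgv, smul_eq_mul]; ring⟩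
      have hthis := LinearMap.finrank_range_add_finrank_ker g
      rw [LinearMap.range_eq_top.mpr hsurj, finrank_top, Module.finrank_self] at hthis
      have h4 : Module.finrank ℝ (Fin 4 → ℝ) = 4 := by simp
      rw [h4] at hthis
      rw [hN0]
      omega
    refine ⟨P0.map (E.symm : (Fin 4 → ℝ) →ₗ[ℝ] (Fin 4 → ℝ)), N0.map (E.symm : (Fin 4 → ℝ) →ₗ[ℝ] (Fin 4 → ℝ)), ?_, ?_, ?_, ?_, ?_⟩
    · exact (Submodule.orderIsoMapComap E.symm).isCompl hcompl0
    · rw [LinearEquiv.finrank_map_eq]; exact hrk0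
    · rw [LinearEquiv.finrank_map_eq]; exact hrkN0
    · intro ξ hξ hne
      obtain ⟨x, hx, hxe⟩ := Submodule.mem_map.mp hξ
      have hmv : M.mulVec ξ = x := by
        rw [← hE, ← hxe]; exact E.apply_symm_apply x
      rw [hP0, Submodule.mem_span_singleton] at hx
      obtain ⟨c, rfl⟩ := hx
      have hc : c ≠ 0 := by
        intro h; apply hne; apply hinj
        rw [hmv, h, Matrix.mulVec_zero, zero_smul]
      rw [hQ, hmv]
      have e0 : (c • v) 0 = c := by simp [hv]
      have e1 : (c • v) 1 = c := by simp [hv]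
      have e2 : (c • v) 2 = 0 := by simp [hv]
      have e3 : (c • v) 3 = 0 := by simp [hv]
      rw [e0, e1, e2, e3]
      exact stmt14_aux_pos c hc
    · intro ξ hξ hne
      obtain ⟨x, hx, hxe⟩ := Submodule.mem_map.mp hξ
      have hmv : M.mulVec ξ = x := by
        rw [← hE, ← hxe]; exact E.apply_symm_apply x
      rw [hN0, LinearMap.mem_ker, hgx] at hx
      have hgx' : x 0 + x 1 = 0 := hx
      have hxne : x ≠ 0 := by
        intro h; apply hne; apply hinj; rw [hmv, h, Matrix.mulVec_zero]
      have hsome : x 0 ≠ 0 ∨ x 2 ≠ 0 ∨ x 3 ≠ 0 := by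
        by_contra hcon
        push_neg at hcon
        obtain ⟨e0, e2, e3⟩ := hcon
        apply hxne; funext k; fin_cases k
        · exact e0
        · simp; linarith
        · exact e2
        · exact e3
      rw [hQ, hmv]
      exact stmt14_aux_neg (x 0) (x 1) (x 2) (x 3) (by linarith) hsome
end

section
/- Let G₂, G₁, G₀ ∈ ℂ and s ∈ ℝ with (1 + s/2)² - |G₂|² ≠ 0. Define G₂# = -G₂/((1+s/2)² - |G₂|²), G₁# = -((1+s/2)·G₁ + conj(G₁)·G₂)/((1+s/2)² - |G₂|²), and suppose also 1 - |G₂| + s/2 > 0 and 1 + |G₂| + s/2 > 0, and set s# = 1/(1-|G₂|+s/2) + 1/(1+|G₂|+s/2) - 2. Then applying the same formulas to (G₂#, G₁#, s#) recovers (G₂, G₁): that is, -G₂#/((1+s#/2)² - |G₂#|²) = G₂ and -((1+s#/2)·G₁# + conj(G₁#)·G₂#)/((1+s#/2)² - |G₂#|²) = G₁. -/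
/-!
Write `a = 1 + s/2` and `D = a² - |G₂|²`. The sharp map sends `(a, G₂, G₁)` to
`(a/D, -G₂/D, -(a G₁ + conj G₁ G₂)/D)`; the hypotheses give `D = (a - |G₂|)(a + |G₂|) > 0`, and
partial fractions show `1 + s#/2 = a/D`. The new determinant is `(a² - |G₂|²)/D² = 1/D`, so dividing
by it multiplies by `D` and undoes the first step; for `G₁` the cross terms cancel because
`conj G₂ · G₂ = |G₂|²`.
-/

open ComplexConjugate

namespace RadiationGauge

variable (a : ℝ) (G₂ G₁ : ℂ)

noncomputable def det : ℝ := a ^ 2 - ‖G₂‖ ^ 2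

noncomputable def sharpA : ℝ := a / det a G₂

noncomputable def sharp₂ : ℂ := -G₂ / det a G₂

noncomputable def sharp₁ : ℂ := -(a * G₁ + conj G₁ * G₂) / det a G₂

theorem det_sharp : det (sharpA a G₂) (sharp₂ a G₂) = (det a G₂)⁻¹ := by
  rcases eq_or_ne (det a G₂) 0 with h | h
  · rw [sharpA, sharp₂, h]
    simp [det]
  · rw [det, sharpA, sharp₂, norm_div, norm_neg, Complex.norm_real, Real.norm_eq_abs, div_pow,
      div_pow, sq_abs, ← sub_div, ← det, sq, div_mul_cancel_right₀ h]

theorem sharp₂_sharp (h : det a G₂ ≠ 0) : sharp₂ (sharpA a G₂) (sharp₂ a G₂) = G₂ := by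
  rw [sharp₂, det_sharp, sharp₂]
  have : (det a G₂ : ℂ) ≠ 0 := by exact_mod_cast h
  push_cast
  field_simp

theorem sharp₁_sharp (h : det a G₂ ≠ 0) :
    sharp₁ (sharpA a G₂) (sharp₂ a G₂) (sharp₁ a G₂ G₁) = G₁ := by
  have hconj : conj G₂ * G₂ = a ^ 2 - det a G₂ := by
    rw [mul_comm, Complex.mul_conj, Complex.normSq_eq_norm_sq, det]
    push_cast
    ring
  have hD : (det a G₂ : ℂ) ≠ 0 := by exact_mod_cast h
  rw [sharp₁, det_sharp, sharpA, sharp₁, sharp₂]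
  simp only [map_div₀, map_neg, map_add, map_mul, Complex.conj_conj, Complex.conj_ofReal]
  push_cast
  field_simp
  linear_combination (-G₁) * hconj

theorem det_pos (h1 : 0 < a - ‖G₂‖) (h2 : 0 < a + ‖G₂‖) : 0 < det a G₂ := by
  rw [det, sq_sub_sq]
  exact mul_pos h2 h1

theorem one_add_half_inv_add_inv_sub_two (h1 : a - ‖G₂‖ ≠ 0) (h2 : a + ‖G₂‖ ≠ 0) :
    1 + (1 / (a - ‖G₂‖) + 1 / (a + ‖G₂‖) - 2) / 2 = sharpA a G₂ := by
  rw [sharpA, det, sq_sub_sq]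
  field_simp
  ring

end RadiationGauge

open RadiationGauge in
theorem stmt16_general (G₂ G₁ : ℂ) (s : ℝ)
    (h1 : 0 < 1 - ‖G₂‖ + s/2) (h2 : 0 < 1 + ‖G₂‖ + s/2) :
    let d : ℂ := (1 + (s:ℂ)/2)^2 - ((‖G₂‖ : ℝ) : ℂ)^2
    let G₂s : ℂ := -G₂ / d
    let G₁s : ℂ := -((1 + (s:ℂ)/2) * G₁ + (starRingEnd ℂ) G₁ * G₂) / d
    let ss : ℝ := 1/(1 - ‖G₂‖ + s/2) + 1/(1 + ‖G₂‖ + s/2) - 2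
    let ds : ℂ := (1 + (ss:ℂ)/2)^2 - ((‖G₂s‖ : ℝ) : ℂ)^2
    (-G₂s / ds = G₂ ∧
      -((1 + (ss:ℂ)/2) * G₁s + (starRingEnd ℂ) G₁s * G₂s) / ds = G₁) := by
  intro d G₂s G₁s ss ds
  have hd : d = det (1 + s / 2) G₂ := by simp [d, det]
  have hG₂s : G₂s = sharp₂ (1 + s / 2) G₂ := by rw [sharp₂, ← hd]
  have hG₁s : G₁s = sharp₁ (1 + s / 2) G₂ G₁ := by simp only [sharp₁, ← hd, G₁s]; push_cast; rfl
  have h1' : 0 < 1 + s / 2 - ‖G₂‖ := by linarith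
  have h2' : 0 < 1 + s / 2 + ‖G₂‖ := by linarith
  have hss : 1 + (ss : ℂ) / 2 = sharpA (1 + s / 2) G₂ := by
    rw [← one_add_half_inv_add_inv_sub_two _ _ h1'.ne' h2'.ne']
    simp only [ss]
    push_cast
    ring
  have hds : ds = det (sharpA (1 + s / 2) G₂) (sharp₂ (1 + s / 2) G₂) := by
    simp only [ds, hss, ← hG₂s, det]; push_cast; rfl
  have hD := (det_pos _ G₂ h1' h2').ne'
  refine ⟨?_, ?_⟩
  · rw [hds, hG₂s]
    exact sharp₂_sharp _ _ hD
  · rw [hds, hss, hG₁s, hG₂s]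
    exact sharp₁_sharp _ _ _ hD

/-- The algebraic relations between the background-frame components `(G₂, G₁, slashed G)`
of a radiation-gauge metric and the components `(G₂^#, G₁^#, slashed G^#)` of its inverse
are mutually inverse: applying them twice recovers `(G₂, G₁)`. -/
theorem stmt16 (G₂ G₁ G₀ : ℂ) (s : ℝ)
    (hden : ((1 + s/2)^2 - Complex.normSq G₂ : ℝ) ≠ 0)
    (h1 : 0 < 1 - ‖G₂‖ + s/2) (h2 : 0 < 1 + ‖G₂‖ + s/2) :
    let d : ℂ := (1 + (s:ℂ)/2)^2 - ((‖G₂‖ : ℝ) : ℂ)^2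
    let G₂s : ℂ := -G₂ / d
    let G₁s : ℂ := -((1 + (s:ℂ)/2) * G₁ + (starRingEnd ℂ) G₁ * G₂) / d
    let ss : ℝ := 1/(1 - ‖G₂‖ + s/2) + 1/(1 + ‖G₂‖ + s/2) - 2
    let ds : ℂ := (1 + (ss:ℂ)/2)^2 - ((‖G₂s‖ : ℝ) : ℂ)^2
    (-G₂s / ds = G₂ ∧
      -((1 + (ss:ℂ)/2) * G₁s + (starRingEnd ℂ) G₁s * G₂s) / ds = G₁) :=
  stmt16_general G₂ G₁ s h1 h2
end
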